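/- Let X be a type, S : Set X a feasible set, f₁ f₂ : X → ℝ two objective functions, and L₁ < U₁, L₂ < U₂ real numbers. Define the aggregate membership value μ(x) = min ((U₁ - f₁ x) / (U₁ - L₁)) ((U₂ - f₂ x) / (U₂ - L₂)). If x* ∈ S maximizes μ over S (i.e., μ(x) ≤ μ(x*) for all x ∈ S), then x* is weakly Pareto optimal for the bi-objective minimization problem: there is no x ∈ S with f₁ x < f₁ x* and f₂ x < f₂ x*. -/

import Mathlib

theorem strictAnti_sub_div_sub {K : Type*} [Field K] [LinearOrder K] [IsStrictOrderedRing K]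
    {L U : K} (h : L < U) : StrictAnti fun t : K => (U - t) / (U - L) :=
  fun _ _ hab => div_lt_div_of_pos_right (sub_lt_sub_left hab U) (sub_pos.mpr h)

theorem fuzzy_max_weak_pareto_general {X : Type*} (S : Set X) (f₁ f₂ : X → ℝ)
    (L₁ U₁ L₂ U₂ : ℝ) (h₁ : L₁ < U₁) (h₂ : L₂ < U₂)
    (μ : X → ℝ)
    (hμ : ∀ x, μ x = min ((U₁ - f₁ x) / (U₁ - L₁)) ((U₂ - f₂ x) / (U₂ - L₂)))
    (xs : X) (hmax : ∀ x ∈ S, μ x ≤ μ xs) :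
    ¬ ∃ x ∈ S, f₁ x < f₁ xs ∧ f₂ x < f₂ xs := by
  rintro ⟨x, hxS, hf₁, hf₂⟩
  refine (hmax x hxS).not_gt ?_
  rw [hμ, hμ]
  exact min_lt_min (strictAnti_sub_div_sub h₁ hf₁) (strictAnti_sub_div_sub h₂ hf₂)

/-- A maximizer of the aggregate fuzzy membership value
`μ x = min ((U₁ - f₁ x)/(U₁ - L₁)) ((U₂ - f₂ x)/(U₂ - L₂))` over the feasible
set `S` is weakly Pareto optimal for the bi-objective minimization problem. -/
theorem fuzzy_max_weak_pareto {X : Type*} (S : Set X) (f₁ f₂ : X → ℝ)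
    (L₁ U₁ L₂ U₂ : ℝ) (h₁ : L₁ < U₁) (h₂ : L₂ < U₂)
    (μ : X → ℝ)
    (hμ : ∀ x, μ x = min ((U₁ - f₁ x) / (U₁ - L₁)) ((U₂ - f₂ x) / (U₂ - L₂)))
    (xs : X) (hxs : xs ∈ S) (hmax : ∀ x ∈ S, μ x ≤ μ xs) :
    ¬ ∃ x ∈ S, f₁ x < f₁ xs ∧ f₂ x < f₂ xs :=
  fuzzy_max_weak_pareto_general S f₁ f₂ L₁ U₁ L₂ U₂ h₁ h₂ μ hμ xs hmax
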